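/- arXiv:1306.2981 — 3 statements merged into one kernel-verified Lean document; each statement's English description precedes it below -/
import Mathlib

section
/- For any two (bounded) linear operators A and B on a Banach space, the Dyson/Duhamel identity holds: e^{t(A+B)} = e^{tA} + ∫₀ᵗ e^{(t-s)(A+B)} B e^{sA} ds. -/
open NormedSpace intervalIntegral

/-- Dyson/Duhamel formula: for bounded operators `A B` on a Banach space,
`e^{t(A+B)} = e^{tA} + ∫₀ᵗ e^{(t-s)(A+B)} B e^{sA} ds`. -/
theorem dyson_duhamel {X : Type*} [NormedAddCommGroup X] [NormedSpace ℝ X] [CompleteSpace X]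
    (A B : X →L[ℝ] X) (t : ℝ) :
    exp (t • (A + B)) =
      exp (t • A) + ∫ s in (0:ℝ)..t, exp ((t - s) • (A + B)) * B * exp (s • A) := by
  have hgc : Continuous fun s : ℝ => exp ((t - s) • (A + B)) * B * exp (s • A) := by
    apply Continuous.mul
    · exact ((continuous_iff_continuousAt.2 fun x => (exp_analytic (𝕂 := ℝ) x).continuousAt).comp ((continuous_const.sub continuous_id).smul
        continuous_const)).mul continuous_const
    · exact (continuous_iff_continuousAt.2 fun x => (exp_analytic (𝕂 := ℝ) x).continuousAt).comp (continuous_id.smul continuous_const)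
  have key : ∀ s : ℝ, HasDerivAt
      (fun u : ℝ => exp ((t - u) • (A + B)) * exp (u • A))
      (-(exp ((t - s) • (A + B)) * B * exp (s • A))) s := by
    intro s
    have h0 : HasDerivAt (fun u : ℝ => t - u) (-1) s := by
      simpa using (hasDerivAt_id s).const_sub t
    have h1 : HasDerivAt (fun u : ℝ => exp ((t - u) • (A + B)))
        (-(exp ((t - s) • (A + B)) * (A + B))) s := by
      have := (hasDerivAt_exp_smul_const (𝕂 := ℝ) (A + B) (t - s)).scomp s h0
      simpa [neg_smul, Function.comp_def] using this
    have h2 : HasDerivAt (fun u : ℝ => exp (u • A)) (A * exp (s • A)) s :=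
      hasDerivAt_exp_smul_const' (𝕂 := ℝ) A s
    have := h1.mul h2
    refine this.congr_deriv ?_
    noncomm_ring
  have hint :
      (∫ s in (0:ℝ)..t, -(exp ((t - s) • (A + B)) * B * exp (s • A))) =
        (fun u : ℝ => exp ((t - u) • (A + B)) * exp (u • A)) t -
        (fun u : ℝ => exp ((t - u) • (A + B)) * exp (u • A)) 0 := by
    apply integral_eq_sub_of_hasDerivAt (fun s _ => key s)
    exact (hgc.neg).intervalIntegrable _ _
  simp only [sub_self, zero_smul, exp_zero, one_mul, mul_one, sub_zero,
    intervalIntegral.integral_neg] at hint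
  have h2 : (∫ s in (0:ℝ)..t, exp ((t - s) • (A + B)) * B * exp (s • A)) =
      exp (t • (A + B)) - exp (t • A) := by
    have := congrArg (fun x => -x) hint
    simpa [neg_sub] using this
  rw [h2]
  abel
end

section
/- With H as given, the conditional expectation with respect to the density e^{−H} with q, p fixed satisfies E[q(1 + α Σᵢ₌₁^m qᵢ²) | q, p] = q (1 + mαε/(1 + αε q²)). -/
open MeasureTheory

lemma aux_int_sq {b : ℝ} (hb : 0 < b) :
    Integrable (fun x : ℝ => x ^ 2 * Real.exp (-b * x ^ 2)) := by
  have := integrable_rpow_mul_exp_neg_mul_sq hb (by norm_num : (-1:ℝ) < 2)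
  have h : ∀ x : ℝ, x ^ (2:ℝ) = x ^ 2 := fun x => by
    rw [show (2:ℝ) = ((2:ℕ):ℝ) by norm_num, Real.rpow_natCast]
  simpa only [h] using this

lemma aux_moment2 {b : ℝ} (hb : 0 < b) :
    ∫ x : ℝ, x ^ 2 * Real.exp (-b * x ^ 2)
      = (2*b)⁻¹ * ∫ x : ℝ, Real.exp (-b * x ^ 2) := by
  have hu : ∀ x : ℝ, HasDerivAt (fun x : ℝ => x) 1 x := fun x => hasDerivAt_id x
  have hv : ∀ x : ℝ, HasDerivAt (fun x : ℝ => -(2*b)⁻¹ * Real.exp (-b * x ^ 2))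
      (x * Real.exp (-b * x ^ 2)) x := by
    intro x
    have h1 : HasDerivAt (fun x : ℝ => -b * x ^ 2) (-b * (2 * x)) x := by
      simpa using ((hasDerivAt_pow 2 x).const_mul (-b))
    have h2 := (h1.exp).const_mul (-(2*b)⁻¹)
    convert h2 using 1
    · rfl
    · rfl
    have hb0 : b ≠ 0 := hb.ne'
    have hbb : b * b⁻¹ = 1 := mul_inv_cancel₀ hb0
    linear_combination (-x * Real.exp (-b * x ^ 2)) * hbb
  have hI1 : Integrable (fun x : ℝ => Real.exp (-b * x ^ 2)) := integrable_exp_neg_mul_sq hb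
  have key := integral_mul_deriv_eq_deriv_mul_of_integrable (fun x _ => hu x) (fun x _ => hv x)
    (by simpa [Pi.mul_def, mul_comm, mul_assoc, mul_left_comm, pow_two]
        using aux_int_sq hb)
    (by simpa [Pi.mul_def] using hI1.const_mul (-(2*b)⁻¹))
    (by simpa [Pi.mul_def, mul_comm, mul_assoc, mul_left_comm]
        using (integrable_mul_exp_neg_mul_sq hb).const_mul (-(2*b)⁻¹))
  have h3 : ∀ x : ℝ, x * (x * Real.exp (-b * x ^ 2)) = x ^ 2 * Real.exp (-b * x ^ 2) := by
    intro x; ring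
  rw [show (fun x : ℝ => x ^ 2 * Real.exp (-b * x ^ 2))
      = fun x : ℝ => x * (x * Real.exp (-b * x ^ 2)) from funext fun x => (h3 x).symm]
  rw [key]
  rw [← integral_neg]
  rw [← integral_const_mul]
  congr 1; funext x; ring

lemma aux_Qint {m : ℕ} (hm : 1 ≤ m) (α : ℝ) {b : ℝ} (hb : 0 < b) :
    ∫ Q : Fin m → ℝ, (1 + α * ∑ i, (Q i) ^ 2) * ∏ i, Real.exp (-b * (Q i) ^ 2)
      = (1 + α * m * (2*b)⁻¹) * (∫ x : ℝ, Real.exp (-b * x ^ 2)) ^ m := by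
  classical
  have hIe : Integrable (fun x : ℝ => Real.exp (-b * x ^ 2)) := integrable_exp_neg_mul_sq hb
  have hIs : Integrable (fun x : ℝ => x ^ 2 * Real.exp (-b * x ^ 2)) := aux_int_sq hb
  have hfun : ∀ i : Fin m, (fun Q : Fin m → ℝ => (Q i) ^ 2 * ∏ j, Real.exp (-b * (Q j) ^ 2))
      = fun Q : Fin m → ℝ => ∏ j, (if j = i then (fun x : ℝ => x ^ 2 * Real.exp (-b * x ^ 2))
          else (fun x : ℝ => Real.exp (-b * x ^ 2))) (Q j) := by
    intro i
    funext Q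
    have h1 : ∀ j : Fin m,
        (if j = i then (fun x : ℝ => x ^ 2 * Real.exp (-b * x ^ 2))
          else (fun x : ℝ => Real.exp (-b * x ^ 2))) (Q j)
        = (if j = i then (Q j) ^ 2 else 1) * Real.exp (-b * (Q j) ^ 2) := by
      intro j; split_ifs <;> simp
    rw [Finset.prod_congr rfl (fun j _ => h1 j), Finset.prod_mul_distrib,
      Finset.prod_ite_eq' Finset.univ i (fun j => (Q j) ^ 2)]
    simp
  have intProd : Integrable (fun Q : Fin m → ℝ => ∏ i, Real.exp (-b * (Q i) ^ 2)) :=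
    Integrable.fintype_prod (f := fun _ : Fin m => fun x : ℝ => Real.exp (-b * x ^ 2))
      (fun _ => hIe)
  have intI : ∀ i : Fin m,
      Integrable (fun Q : Fin m → ℝ => (Q i) ^ 2 * ∏ j, Real.exp (-b * (Q j) ^ 2)) := by
    intro i
    rw [hfun i]
    exact Integrable.fintype_prod
      (f := fun j : Fin m => if j = i then (fun x : ℝ => x ^ 2 * Real.exp (-b * x ^ 2))
        else (fun x : ℝ => Real.exp (-b * x ^ 2)))
      (fun j => by dsimp only; split_ifs <;> [exact hIs; exact hIe])
  have main : ∀ i : Fin m,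
      (∫ Q : Fin m → ℝ, (Q i) ^ 2 * ∏ j, Real.exp (-b * (Q j) ^ 2))
        = (∫ x : ℝ, x ^ 2 * Real.exp (-b * x ^ 2)) * (∫ x : ℝ, Real.exp (-b * x ^ 2)) ^ (m-1) := by
    intro i
    rw [hfun i, integral_fintype_prod_volume_eq_prod (ι := Fin m)
      (fun j => if j = i then (fun x : ℝ => x ^ 2 * Real.exp (-b * x ^ 2))
        else (fun x : ℝ => Real.exp (-b * x ^ 2)))]
    have h2 : ∀ j : Fin m, (∫ x : ℝ, (if j = i then (fun x : ℝ => x ^ 2 * Real.exp (-b * x ^ 2))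
          else (fun x : ℝ => Real.exp (-b * x ^ 2))) x)
        = if j = i then ∫ x : ℝ, x ^ 2 * Real.exp (-b * x ^ 2)
          else ∫ x : ℝ, Real.exp (-b * x ^ 2) := by
      intro j; split_ifs <;> rfl
    rw [Finset.prod_congr rfl (fun j _ => h2 j),
      ← Finset.prod_erase_mul Finset.univ _ (Finset.mem_univ i), if_pos rfl,
      Finset.prod_congr rfl (fun j hj => if_neg (Finset.ne_of_mem_erase hj)),
      Finset.prod_const, Finset.card_erase_of_mem (Finset.mem_univ i), Finset.card_univ,
      Fintype.card_fin]
    ring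
  have expand : (fun Q : Fin m → ℝ => (1 + α * ∑ i, (Q i) ^ 2) * ∏ i, Real.exp (-b * (Q i) ^ 2))
      = fun Q : Fin m → ℝ => (∏ i, Real.exp (-b * (Q i) ^ 2))
          + ∑ i, α * ((Q i) ^ 2 * ∏ j, Real.exp (-b * (Q j) ^ 2)) := by
    funext Q
    have : ∑ i, α * ((Q i) ^ 2 * ∏ j, Real.exp (-b * (Q j) ^ 2))
        = α * (∑ i, (Q i) ^ 2) * ∏ j, Real.exp (-b * (Q j) ^ 2) := by
      rw [mul_assoc, Finset.sum_mul, Finset.mul_sum]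
    rw [this]; ring
  rw [expand, integral_add intProd (integrable_finset_sum _ (fun i _ => (intI i).const_mul α)),
    integral_finset_sum _ (fun i _ => (intI i).const_mul α)]
  have h4 : ∀ i : Fin m, (∫ Q : Fin m → ℝ, α * ((Q i) ^ 2 * ∏ j, Real.exp (-b * (Q j) ^ 2)))
      = α * ((2*b)⁻¹ * (∫ x : ℝ, Real.exp (-b * x ^ 2)) ^ m) := by
    intro i
    have hpow : (∫ x : ℝ, Real.exp (-b * x ^ 2)) * (∫ x : ℝ, Real.exp (-b * x ^ 2)) ^ (m-1)
        = (∫ x : ℝ, Real.exp (-b * x ^ 2)) ^ m := by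
      rw [← pow_succ', Nat.sub_add_cancel hm]
    rw [integral_const_mul, main i, aux_moment2 hb, mul_assoc ((2*b)⁻¹), hpow]
  rw [Finset.sum_congr rfl (fun i _ => h4 i), Finset.sum_const, Finset.card_univ, Fintype.card_fin,
    integral_fintype_prod_volume_eq_pow (ι := Fin m) (fun x : ℝ => Real.exp (-b * x ^ 2)), Fintype.card_fin]
  ring

/-- For `H = (1/2)(p² + q² + Σᵢ pᵢ²/gᵢ + (Σᵢ qᵢ²)/ε + α q² Σᵢ qᵢ²)`, the conditional
expectation with respect to the density `e^{−H}` with `q, p` fixed satisfies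
`E[q(1 + α Σᵢ qᵢ²) | q, p] = q (1 + mαε/(1 + αε q²))`. -/
theorem conditional_expectation_force {m : ℕ} (hm : 1 ≤ m) (α ε : ℝ) (hα : 0 < α) (hε : 0 < ε)
    (g : Fin m → ℝ) (hg : ∀ i, 0 < g i)
    (H : ℝ → ℝ → (Fin m → ℝ) → (Fin m → ℝ) → ℝ)
    (hH : ∀ q p Q P, H q p Q P = (1 / 2) * (p ^ 2 + q ^ 2 + ∑ i, (P i) ^ 2 / g i
      + (∑ i, (Q i) ^ 2) / ε + α * q ^ 2 * ∑ i, (Q i) ^ 2))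
    (q p : ℝ) :
    (∫ z : (Fin m → ℝ) × (Fin m → ℝ),
        q * (1 + α * ∑ i, (z.1 i) ^ 2) * Real.exp (-(H q p z.1 z.2))) /
      (∫ z : (Fin m → ℝ) × (Fin m → ℝ), Real.exp (-(H q p z.1 z.2))) =
      q * (1 + m * α * ε / (1 + α * ε * q ^ 2)) := by
  have h1q : (0:ℝ) < 1 + α * ε * q ^ 2 := by positivity
  set b : ℝ := (1 + α * ε * q ^ 2) / (2 * ε) with hbdef
  have hb : 0 < b := by positivity
  set E0 : ℝ := Real.exp (-(1/2) * (p ^ 2 + q ^ 2)) with hE0def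
  set F : (Fin m → ℝ) → ℝ := fun Q => E0 * ∏ i, Real.exp (-b * (Q i) ^ 2) with hFdef
  set G : (Fin m → ℝ) → ℝ := fun P => ∏ i, Real.exp (-(2 * g i)⁻¹ * (P i) ^ 2) with hGdef
  have hsplit : ∀ Q P : Fin m → ℝ, Real.exp (-(H q p Q P)) = F Q * G P := by
    intro Q P
    rw [hFdef, hGdef, hE0def]
    dsimp only
    rw [← Real.exp_sum, ← Real.exp_sum, ← Real.exp_add, ← Real.exp_add]
    congr 1
    have e1 : ∑ i, -b * (Q i) ^ 2 = -b * ∑ i, (Q i) ^ 2 := by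
      rw [Finset.mul_sum]
    have e2 : ∑ i, -(2 * g i)⁻¹ * (P i) ^ 2 = -(1/2) * ∑ i, (P i) ^ 2 / g i := by
      rw [Finset.mul_sum]
      refine Finset.sum_congr rfl fun i _ => ?_
      have h := (hg i).ne'
      field_simp
    rw [e1, e2, hH, hbdef]
    field_simp
    ring
  have hnum : (∫ z : (Fin m → ℝ) × (Fin m → ℝ),
        q * (1 + α * ∑ i, (z.1 i) ^ 2) * Real.exp (-(H q p z.1 z.2)))
      = (∫ Q : Fin m → ℝ, q * (1 + α * ∑ i, (Q i) ^ 2) * F Q) * ∫ P : Fin m → ℝ, G P := by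
    have : (fun z : (Fin m → ℝ) × (Fin m → ℝ) =>
          q * (1 + α * ∑ i, (z.1 i) ^ 2) * Real.exp (-(H q p z.1 z.2)))
        = fun z => (fun Q => q * (1 + α * ∑ i, (Q i) ^ 2) * F Q) z.1 * G z.2 := by
      funext z
      rw [hsplit z.1 z.2]
      ring
    rw [this, Measure.volume_eq_prod]
    exact integral_prod_mul (fun Q : Fin m → ℝ => q * (1 + α * ∑ i, (Q i) ^ 2) * F Q) G
  have hden : (∫ z : (Fin m → ℝ) × (Fin m → ℝ), Real.exp (-(H q p z.1 z.2)))
      = (∫ Q : Fin m → ℝ, F Q) * ∫ P : Fin m → ℝ, G P := by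
    have : (fun z : (Fin m → ℝ) × (Fin m → ℝ) => Real.exp (-(H q p z.1 z.2)))
        = fun z => F z.1 * G z.2 := by
      funext z; exact hsplit z.1 z.2
    rw [this, Measure.volume_eq_prod]
    exact integral_prod_mul F G
  -- compute the Q-integrals
  set K : ℝ := ∫ x : ℝ, Real.exp (-b * x ^ 2) with hKdef
  have hK : 0 < K := by
    rw [hKdef, integral_gaussian]
    exact Real.sqrt_pos.2 (div_pos Real.pi_pos hb)
  have hFint : (∫ Q : Fin m → ℝ, F Q) = E0 * K ^ m := by
    rw [hFdef]
    rw [integral_const_mul, integral_fintype_prod_volume_eq_pow (ι := Fin m)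
      (fun x : ℝ => Real.exp (-b * x ^ 2)), Fintype.card_fin, hKdef]
  have hFint2 : (∫ Q : Fin m → ℝ, q * (1 + α * ∑ i, (Q i) ^ 2) * F Q)
      = q * E0 * ((1 + α * m * (2*b)⁻¹) * K ^ m) := by
    have : (fun Q : Fin m → ℝ => q * (1 + α * ∑ i, (Q i) ^ 2) * F Q)
        = fun Q => (q * E0) * ((1 + α * ∑ i, (Q i) ^ 2) * ∏ i, Real.exp (-b * (Q i) ^ 2)) := by
      funext Q; rw [hFdef]; dsimp only; ring
    rw [this, integral_const_mul, aux_Qint hm α hb, hKdef]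
  have hGpos : 0 < ∫ P : Fin m → ℝ, G P := by
    rw [hGdef, integral_fintype_prod_volume_eq_prod (ι := Fin m)
      (fun i => fun x : ℝ => Real.exp (-(2 * g i)⁻¹ * x ^ 2))]
    refine Finset.prod_pos fun i _ => ?_
    rw [integral_gaussian]
    refine Real.sqrt_pos.2 (div_pos Real.pi_pos (inv_pos.2 ?_))
    have := hg i
    positivity
  have hE0 : 0 < E0 := Real.exp_pos _
  rw [hnum, hden, hFint, hFint2]
  rw [mul_div_mul_right _ _ (ne_of_gt hGpos)]
  have hinv : (2*b)⁻¹ = ε / (1 + α * ε * q ^ 2) := by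
    rw [hbdef]
    field_simp
  rw [hinv]
  field_simp
end

section
/- For the t-model equations dQ/dt = P, dP/dt = −Q(1 + mαε/(1+αεQ²)) − 2mα²ε²Q²Pt/(1+αεQ²)², the reduced energy Ĥ(Q,P) = (1/2)(P² + Q² + m log(1+αεQ²)) is non-increasing in time for t ≥ 0, with dĤ/dt = −2mα²ε²Q²P²t/(1+αεQ²)² ≤ 0. -/
/-- For the t-model equations `dQ/dt = P`,
`dP/dt = −Q(1 + mαε/(1+αεQ²)) − 2mα²ε²Q²Pt/(1+αεQ²)²`, the reduced energy
`Ĥ(Q,P) = (1/2)(P² + Q² + m log(1+αεQ²))` satisfies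
`dĤ/dt = −2mα²ε²Q²P²t/(1+αεQ²)² ≤ 0` for `t ≥ 0`, and is non-increasing. -/
theorem t_model_energy_decay {m : ℕ} (hm : 1 ≤ m) (α ε : ℝ) (hα : 0 < α) (hε : 0 < ε)
    (Q P : ℝ → ℝ)
    (hQ : ∀ t, HasDerivAt Q (P t) t)
    (hP : ∀ t, HasDerivAt P
      (-(Q t) * (1 + m * α * ε / (1 + α * ε * (Q t) ^ 2))
        - 2 * m * α ^ 2 * ε ^ 2 * (Q t) ^ 2 * P t * t / (1 + α * ε * (Q t) ^ 2) ^ 2) t)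
    (Hhat : ℝ → ℝ → ℝ)
    (hHhat : ∀ q p, Hhat q p = (1 / 2) * (p ^ 2 + q ^ 2 + m * Real.log (1 + α * ε * q ^ 2))) :
    (∀ t, HasDerivAt (fun τ => Hhat (Q τ) (P τ))
      (-(2 * m * α ^ 2 * ε ^ 2 * (Q t) ^ 2 * (P t) ^ 2 * t / (1 + α * ε * (Q t) ^ 2) ^ 2)) t) ∧
    (∀ t, 0 ≤ t →
      -(2 * m * α ^ 2 * ε ^ 2 * (Q t) ^ 2 * (P t) ^ 2 * t / (1 + α * ε * (Q t) ^ 2) ^ 2) ≤ 0) ∧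
    (∀ s t, 0 ≤ s → s ≤ t → Hhat (Q t) (P t) ≤ Hhat (Q s) (P s)) := by
  have hDpos : ∀ t, (0:ℝ) < 1 + α * ε * (Q t) ^ 2 := by
    intro t
    have : 0 ≤ α * ε * (Q t) ^ 2 := by positivity
    linarith
  have key : ∀ t, HasDerivAt (fun τ => Hhat (Q τ) (P τ))
      (-(2 * m * α ^ 2 * ε ^ 2 * (Q t) ^ 2 * (P t) ^ 2 * t / (1 + α * ε * (Q t) ^ 2) ^ 2)) t := by
    intro t
    have hD := hDpos t
    have hDne : (1 + α * ε * (Q t) ^ 2) ≠ 0 := ne_of_gt hD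
    have h1 : HasDerivAt (fun τ => (P τ) ^ 2) (2 * P t *
        (-(Q t) * (1 + m * α * ε / (1 + α * ε * (Q t) ^ 2))
          - 2 * m * α ^ 2 * ε ^ 2 * (Q t) ^ 2 * P t * t / (1 + α * ε * (Q t) ^ 2) ^ 2)) t := by
      simpa [mul_comm] using ((hP t).fun_pow 2)
    have h2 : HasDerivAt (fun τ => (Q τ) ^ 2) (2 * Q t * P t) t := by
      simpa [mul_comm] using ((hQ t).fun_pow 2)
    have h3 : HasDerivAt (fun τ => (1:ℝ) + α * ε * (Q τ) ^ 2)
        (α * ε * (2 * Q t * P t)) t := ((h2.const_mul (α * ε)).const_add 1)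
    have h4 : HasDerivAt (fun τ => Real.log (1 + α * ε * (Q τ) ^ 2))
        (α * ε * (2 * Q t * P t) / (1 + α * ε * (Q t) ^ 2)) t := h3.log hDne
    have h : HasDerivAt (fun τ => (1/2 : ℝ) * ((P τ) ^ 2 + (Q τ) ^ 2 +
        m * Real.log (1 + α * ε * (Q τ) ^ 2)))
        ((1/2 : ℝ) * ((2 * P t *
          (-(Q t) * (1 + m * α * ε / (1 + α * ε * (Q t) ^ 2))
            - 2 * m * α ^ 2 * ε ^ 2 * (Q t) ^ 2 * P t * t / (1 + α * ε * (Q t) ^ 2) ^ 2))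
          + 2 * Q t * P t
          + m * (α * ε * (2 * Q t * P t) / (1 + α * ε * (Q t) ^ 2)))) t :=
      (((h1.add h2).add (h4.const_mul (m:ℝ))).const_mul (1/2))
    have heq : (fun τ => Hhat (Q τ) (P τ)) = fun τ => (1/2 : ℝ) * ((P τ) ^ 2 + (Q τ) ^ 2 +
        m * Real.log (1 + α * ε * (Q τ) ^ 2)) := by
      funext τ; rw [hHhat]
    rw [heq]
    convert h using 1
    field_simp
    ring
  refine ⟨key, ?_, ?_⟩
  · intro t ht
    have hD := hDpos t
    have : 0 ≤ 2 * m * α ^ 2 * ε ^ 2 * (Q t) ^ 2 * (P t) ^ 2 * t / (1 + α * ε * (Q t) ^ 2) ^ 2 := by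
      positivity
    linarith
  · intro s t hs hst
    have hanti : AntitoneOn (fun τ => Hhat (Q τ) (P τ)) (Set.Ici (0:ℝ)) := by
      apply antitoneOn_of_deriv_nonpos (convex_Ici 0)
      · exact fun τ _ => ((key τ).continuousAt).continuousWithinAt
      · intro τ hτ
        exact ((key τ).differentiableAt).differentiableWithinAt
      · intro τ hτ
        rw [(key τ).deriv]
        simp only [interior_Ici, Set.mem_Ioi] at hτ
        have hD := hDpos τ
        have : 0 ≤ 2 * m * α ^ 2 * ε ^ 2 * (Q τ) ^ 2 * (P τ) ^ 2 * τ / (1 + α * ε * (Q τ) ^ 2) ^ 2 := by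
          positivity
        linarith
    exact hanti hs (le_trans hs hst) hst
end
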